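/- Let N ≥ 2 be an integer, λ > 0 real, k ∈ ℕ, and fix y ∈ ℝ^N∖{0}. Then for all x ∈ ℝ^N∖{0}, Δ_x [ C^λ_k(w)·‖x‖^k ] = 2λ(2λ+2−N)·C^{λ+1}_{k−2}(w)·‖x‖^{k−2}. In particular, if λ = (N−2)/2 (and N ≥ 3), the function x ↦ C^λ_k(w)‖x‖^k is harmonic on ℝ^N∖{0}. -/

import Mathlib

open scoped RealInnerProductSpace

/-- The Gegenbauer polynomial `C_k^λ(z)` given by its explicit sum. -/
noncomputable def gegenbauer (k : ℕ) (l : ℝ) (z : ℝ) : ℝ :=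
  ∑ j ∈ Finset.range (k / 2 + 1),
    (-1 : ℝ) ^ j * (Real.Gamma ((k : ℝ) - j + l) /
      (Real.Gamma l * (Nat.factorial j) * (Nat.factorial (k - 2 * j)))) * (2 * z) ^ (k - 2 * j)

/-- Gegenbauer polynomials with the convention `C^λ_j = 0` for `j < 0`. -/
noncomputable def gegenbauerZ (k : ℤ) (l : ℝ) (z : ℝ) : ℝ :=
  if k < 0 then 0 else gegenbauer k.toNat l z

/-- The Euclidean Laplacian: the sum of the second partial derivatives. -/
noncomputable def lap {N : ℕ} (f : EuclideanSpace ℝ (Fin N) → ℝ)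
    (x : EuclideanSpace ℝ (Fin N)) : ℝ :=
  ∑ i : Fin N, fderiv ℝ (fun z => fderiv ℝ f z (EuclideanSpace.single i 1)) x
    (EuclideanSpace.single i 1)

/-- `Δ_x` acting on a function of two variables. -/
noncomputable def lapX {N : ℕ}
    (F : EuclideanSpace ℝ (Fin N) → EuclideanSpace ℝ (Fin N) → ℝ) :
    EuclideanSpace ℝ (Fin N) → EuclideanSpace ℝ (Fin N) → ℝ :=
  fun x y => lap (fun x' => F x' y) x

/-- `Δ_y` acting on a function of two variables. -/
noncomputable def lapY {N : ℕ}
    (F : EuclideanSpace ℝ (Fin N) → EuclideanSpace ℝ (Fin N) → ℝ) :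
    EuclideanSpace ℝ (Fin N) → EuclideanSpace ℝ (Fin N) → ℝ :=
  fun x y => lap (F x) y

open scoped Nat
open InnerProductSpace Laplacian Finset Filter Topology

/-! Away from the origin, with `u = (2 / ‖y‖) • y`, the function `C^λ_k(w) ‖x‖^k` is the
polynomial `∑ⱼ cⱼ ⟪x, u⟫^(k-2j) ‖x‖^(2j)`, the `cⱼ` being the coefficients of `C^λ_k`. The
Laplacian of `⟪x, u⟫^m ‖x‖^(2j)` is `m(m-1)‖u‖² ⟪x, u⟫^(m-2) ‖x‖^(2j)
+ 2j(2m+2j+N-2) ⟪x, u⟫^m ‖x‖^(2j-2)`, so `Δ` turns the sum into one of the same shape and degree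
`k - 2`; by `Γ(s+1) = s Γ(s)` its coefficients are `2λ(2λ+2-N)` times those of `C^{λ+1}_{k-2}`. -/

theorem sum_range_succ_add_shift {M : Type*} [AddCommMonoid M] (f g : ℕ → M) (n : ℕ)
    (hf : f n = 0) (hg : g 0 = 0) :
    ∑ i ∈ range (n + 1), (f i + g i) = ∑ i ∈ range n, (f i + g (i + 1)) := by
  rw [sum_add_distrib, sum_range_succ, hf, add_zero, sum_range_succ' g, hg, add_zero,
    sum_add_distrib]

theorem natCast_mul_natCast_sub_one {R : Type*} [Ring R] (m : ℕ) :
    (m : R) * ((m - 1 : ℕ) : R) = m * (m - 1) := by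
  cases m <;> simp

noncomputable def gegenbauerCoeff (k : ℕ) (l : ℝ) (j : ℕ) : ℝ :=
  (-1) ^ j * (Real.Gamma ((k : ℝ) - j + l) / (Real.Gamma l * j ! * (k - 2 * j)!))

theorem gegenbauer_eq_sum_gegenbauerCoeff (k : ℕ) (l z : ℝ) :
    gegenbauer k l z = ∑ j ∈ range (k / 2 + 1), gegenbauerCoeff k l j * (2 * z) ^ (k - 2 * j) :=
  rfl

theorem gegenbauerCoeff_recurrence {l : ℝ} (hl : 0 < l) (n : ℝ) {k t : ℕ} (ht : 2 * t ≤ k) :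
    4 * ((k - 2 * t : ℕ) + 2) * ((k - 2 * t : ℕ) + 1) * gegenbauerCoeff (k + 2) l t +
        2 * (t + 1) * (2 * (k - 2 * t : ℕ) + 2 * t + n) * gegenbauerCoeff (k + 2) l (t + 1) =
      2 * l * (2 * l + 2 - n) * gegenbauerCoeff k (l + 1) t := by
  obtain ⟨m, rfl⟩ := Nat.exists_eq_add_of_le ht
  have hΓ : Real.Gamma (m + t + 2 + l) = (m + t + 1 + l) * Real.Gamma (m + t + 1 + l) := by
    rw [← Real.Gamma_add_one (by positivity)]; ring_nf
  have hΓl : Real.Gamma l ≠ 0 := (Real.Gamma_pos_of_pos hl).ne'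
  simp only [gegenbauerCoeff, Nat.add_sub_cancel_left, show 2 * t + m + 2 - 2 * t = m + 2 by omega,
    show 2 * t + m + 2 - 2 * (t + 1) = m by omega, Nat.factorial_succ, pow_succ]
  push_cast
  rw [show 2 * (t : ℝ) + m + 2 - t + l = m + t + 2 + l by ring,
    show 2 * (t : ℝ) + m + 2 - (t + 1) + l = m + t + 1 + l by ring,
    show 2 * (t : ℝ) + m - t + (l + 1) = m + t + 1 + l by ring, hΓ, Real.Gamma_add_one hl.ne']
  field_simp
  ring

section InnerProductSpace

variable {E : Type*} [NormedAddCommGroup E] [InnerProductSpace ℝ E]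

theorem OrthonormalBasis.sum_inner_mul_inner' {ι : Type*} [Fintype ι]
    (v : OrthonormalBasis ι ℝ E) (a b : E) : ∑ i, ⟪v i, a⟫ * ⟪v i, b⟫ = ⟪a, b⟫ := by
  simpa only [real_inner_comm a] using v.sum_inner_mul_inner a b

def innerMonomial (u : E) (m j : ℕ) (x : E) : ℝ := ⟪x, u⟫ ^ m * ⟪x, x⟫ ^ j

theorem contDiff_innerMonomial (u : E) (m j : ℕ) {n : WithTop ℕ∞} :
    ContDiff ℝ n (innerMonomial u m j) :=
  ((contDiff_id.inner ℝ contDiff_const).pow m).mul ((contDiff_id.inner ℝ contDiff_id).pow j)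

theorem fderiv_innerMonomial_apply (u z e : E) (m j : ℕ) :
    fderiv ℝ (innerMonomial u m j) z e =
      m * ⟪e, u⟫ * innerMonomial u (m - 1) j z + 2 * j * ⟪e, z⟫ * innerMonomial u m (j - 1) z := by
  have hφ : DifferentiableAt ℝ (fun x : E => ⟪x, u⟫) z :=
    differentiableAt_id.inner ℝ (differentiableAt_const u)
  have hψ : DifferentiableAt ℝ (fun x : E => ⟪x, x⟫) z :=
    differentiableAt_id.inner ℝ differentiableAt_id
  have dφ : fderiv ℝ (fun x : E => ⟪x, u⟫) z e = ⟪e, u⟫ := by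
    rw [fderiv_inner_apply ℝ differentiableAt_fun_id (differentiableAt_const u)]; simp
  have dψ : fderiv ℝ (fun x : E => ⟪x, x⟫) z e = 2 * ⟪e, z⟫ := by
    rw [fderiv_inner_apply ℝ differentiableAt_fun_id differentiableAt_fun_id]
    simp [real_inner_comm, two_mul]
  unfold innerMonomial
  rw [fderiv_fun_mul (hφ.fun_pow m) (hψ.fun_pow j), fderiv_fun_pow _ hφ, fderiv_fun_pow _ hψ]
  simp only [add_apply, smul_apply, smul_eq_mul, nsmul_eq_mul, dφ, dψ]
  ring

theorem fderiv_fderiv_innerMonomial_apply (u x e : E) (m j : ℕ) :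
    fderiv ℝ (fun z => fderiv ℝ (innerMonomial u m j) z e) x e =
      m * (m - 1) * innerMonomial u (m - 2) j x * (⟪e, u⟫ * ⟪e, u⟫) +
      4 * m * j * innerMonomial u (m - 1) (j - 1) x * (⟪e, u⟫ * ⟪e, x⟫) +
      4 * j * (j - 1) * innerMonomial u m (j - 2) x * (⟪e, x⟫ * ⟪e, x⟫) +
      2 * j * innerMonomial u m (j - 1) x * ⟪e, e⟫ := by
  have hM (m' j' : ℕ) : Differentiable ℝ (innerMonomial u m' j') :=
    (contDiff_innerMonomial u m' j' (n := 1)).differentiable one_ne_zero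
  have hι : Differentiable ℝ (fun z : E => ⟪e, z⟫) :=
    (differentiable_const e).inner ℝ differentiable_id
  have dι : fderiv ℝ (fun z : E => ⟪e, z⟫) x e = ⟪e, e⟫ := by
    rw [fderiv_inner_apply ℝ (differentiableAt_const e) differentiableAt_fun_id]; simp
  simp_rw [fderiv_innerMonomial_apply]
  rw [fderiv_fun_add (((hM _ _).const_mul _) x) (((hι.const_mul _).fun_mul (hM _ _)) x),
    fderiv_const_mul ((hM _ _) x), fderiv_fun_mul ((hι.const_mul _) x) ((hM _ _) x),
    fderiv_const_mul (hι x)]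
  simp only [add_apply, smul_apply, smul_eq_mul, dι, fderiv_innerMonomial_apply]
  rw [Nat.sub_sub, Nat.sub_sub]
  linear_combination
    (innerMonomial u (m - 2) j x * ⟪e, u⟫ * ⟪e, u⟫) * natCast_mul_natCast_sub_one (R := ℝ) m +
      (4 * innerMonomial u m (j - 2) x * ⟪e, x⟫ * ⟪e, x⟫) * natCast_mul_natCast_sub_one (R := ℝ) j

noncomputable def gegenbauerHomog (k : ℕ) (l : ℝ) (u : E) : E → ℝ :=
  ∑ j ∈ range (k / 2 + 1), gegenbauerCoeff k l j • innerMonomial u (k - 2 * j) j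

theorem gegenbauerHomog_apply (k : ℕ) (l : ℝ) (u x : E) :
    gegenbauerHomog k l u x =
      ∑ j ∈ range (k / 2 + 1), gegenbauerCoeff k l j * innerMonomial u (k - 2 * j) j x := by
  simp [gegenbauerHomog]

theorem contDiff_gegenbauerHomog (k : ℕ) (l : ℝ) (u : E) {n : WithTop ℕ∞} :
    ContDiff ℝ n (gegenbauerHomog k l u) := by
  unfold gegenbauerHomog
  rw [sum_fn]
  exact ContDiff.sum fun j _ =>
    (contDiff_innerMonomial u (k - 2 * j) j).const_smul (gegenbauerCoeff k l j)

theorem gegenbauer_mul_norm_pow {x y : E} (hx : x ≠ 0) (hy : y ≠ 0) (k : ℕ) (l : ℝ) :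
    gegenbauer k l (⟪x, y⟫ / (‖x‖ * ‖y‖)) * ‖x‖ ^ k = gegenbauerHomog k l ((2 / ‖y‖) • y) x := by
  rw [gegenbauerHomog_apply, gegenbauer_eq_sum_gegenbauerCoeff, sum_mul]
  refine sum_congr rfl fun j hj => ?_
  have hk : k = (k - 2 * j) + 2 * j := by have := mem_range.mp hj; omega
  have hx' : ‖x‖ ≠ 0 := norm_ne_zero_iff.mpr hx
  have hy' : ‖y‖ ≠ 0 := norm_ne_zero_iff.mpr hy
  rw [innerMonomial, inner_smul_right, real_inner_self_eq_norm_sq, hk, pow_add, pow_mul,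
    ← hk, mul_assoc, ← mul_assoc _ (‖x‖ ^ _), ← mul_pow]
  congr 3
  field_simp

variable [FiniteDimensional ℝ E]

theorem laplacian_eq_sum_fderiv_fderiv {F : Type*} [NormedAddCommGroup F] [NormedSpace ℝ F]
    {ι : Type*} [Fintype ι] (v : OrthonormalBasis ι ℝ E) {f : E → F} {x : E}
    (hf : ContDiffAt ℝ 2 f x) : Δ f x = ∑ i, fderiv ℝ (fun z => fderiv ℝ f z (v i)) x (v i) := by
  have hdf : DifferentiableAt ℝ (fderiv ℝ f) x :=
    (hf.fderiv_right (m := 1) (by norm_num)).differentiableAt (by norm_num)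
  rw [laplacian_eq_iteratedFDeriv_orthonormalBasis f v]
  refine sum_congr rfl fun i _ => ?_
  rw [iteratedFDeriv_two_apply, fderiv_clm_apply hdf (differentiableAt_const _)]
  simp

theorem ContDiffAt.laplacian_sum {F : Type*} [NormedAddCommGroup F] [NormedSpace ℝ F]
    {ι : Type*} {s : Finset ι} {f : ι → E → F} {x : E} (hf : ∀ i ∈ s, ContDiffAt ℝ 2 (f i) x) :
    Δ (∑ i ∈ s, f i) x = ∑ i ∈ s, Δ (f i) x := by
  classical
  induction s using Finset.induction_on with
  | empty => exact congrFun (laplacian_const (c := (0 : F))) x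
  | insert a s ha ih =>
    rw [sum_insert ha, sum_insert ha, (hf a (mem_insert_self a s)).laplacian_add,
      ih fun i hi => hf i (mem_insert_of_mem hi)]
    rw [sum_fn]
    exact ContDiffAt.sum fun i hi => hf i (mem_insert_of_mem hi)

theorem laplacian_innerMonomial (u x : E) (m j : ℕ) :
    Δ (innerMonomial u m j) x =
      m * (m - 1) * ‖u‖ ^ 2 * innerMonomial u (m - 2) j x +
        2 * j * (2 * m + 2 * j + Module.finrank ℝ E - 2) * innerMonomial u m (j - 1) x := by
  set v := stdOrthonormalBasis ℝ E
  have hvv : ∑ i, ⟪v i, v i⟫ = Module.finrank ℝ E := by simp [v.orthonormal.1]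
  have hm : (m : ℝ) * (⟪u, x⟫ * innerMonomial u (m - 1) (j - 1) x) =
      m * innerMonomial u m (j - 1) x := by
    rcases m with _ | m
    · simp
    · simp only [innerMonomial, Nat.add_sub_cancel, pow_succ, real_inner_comm u]; ring
  have hj : (j : ℝ) * (j - 1) * (⟪x, x⟫ * innerMonomial u m (j - 2) x) =
      j * (j - 1) * innerMonomial u m (j - 1) x := by
    rcases j with _ | _ | j
    · simp
    · simp
    · simp only [innerMonomial, show j + 1 + 1 - 2 = j by omega, Nat.add_sub_cancel, pow_succ]
      ring
  rw [laplacian_eq_sum_fderiv_fderiv v (contDiff_innerMonomial u m j).contDiffAt]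
  simp only [fderiv_fderiv_innerMonomial_apply, sum_add_distrib, ← mul_sum,
    v.sum_inner_mul_inner', hvv, real_inner_self_eq_norm_sq u]
  linear_combination (4 * j : ℝ) * hm + 4 * hj

theorem laplacian_gegenbauerHomog_of_lt_two {k : ℕ} (hk : k < 2) (l : ℝ) (u x : E) :
    Δ (gegenbauerHomog k l u) x = 0 := by
  rw [gegenbauerHomog, show k / 2 + 1 = 1 by omega, sum_range_one,
    laplacian_smul _ (contDiff_innerMonomial u _ _).contDiffAt, laplacian_innerMonomial]
  interval_cases k <;> simp

theorem laplacian_gegenbauerHomog_add_two {l : ℝ} (hl : 0 < l) {u : E} (hu : ‖u‖ = 2) (k : ℕ)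
    (x : E) :
    Δ (gegenbauerHomog (k + 2) l u) x =
      2 * l * (2 * l + 2 - Module.finrank ℝ E) * gegenbauerHomog k (l + 1) u x := by
  have hM (j : ℕ) : ContDiffAt ℝ 2 (innerMonomial u (k + 2 - 2 * j) j) x :=
    (contDiff_innerMonomial u _ _).contDiffAt
  have hcM (j : ℕ) :
      ContDiffAt ℝ 2 (gegenbauerCoeff (k + 2) l j • innerMonomial u (k + 2 - 2 * j) j) x :=
    (hM j).const_smul (gegenbauerCoeff (k + 2) l j)
  rw [gegenbauerHomog, ContDiffAt.laplacian_sum fun j _ => hcM j]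
  simp only [fun j => laplacian_smul (gegenbauerCoeff (k + 2) l j) (hM j),
    laplacian_innerMonomial, hu, smul_eq_mul, mul_add, show (k + 2) / 2 = k / 2 + 1 by omega]
  rw [sum_range_succ_add_shift, gegenbauerHomog_apply, mul_sum]
  · refine sum_congr rfl fun t ht => ?_
    have ht' : 2 * t ≤ k := by have := mem_range.mp ht; omega
    rw [show k + 2 - 2 * t - 2 = k - 2 * t by omega, show k + 2 - 2 * (t + 1) = k - 2 * t by omega,
      Nat.add_sub_cancel, show k + 2 - 2 * t = k - 2 * t + 2 by omega]
    push_cast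
    linear_combination innerMonomial u (k - 2 * t) t x *
      gegenbauerCoeff_recurrence hl (Module.finrank ℝ E) ht'
  · obtain h | h : k + 2 - 2 * (k / 2 + 1) = 0 ∨ k + 2 - 2 * (k / 2 + 1) = 1 := by omega
    all_goals rw [h]; norm_num
  · simp

end InnerProductSpace

theorem gegenbauerZ_natCast (k : ℕ) (l z : ℝ) : gegenbauerZ k l z = gegenbauer k l z := by
  simp [gegenbauerZ]

theorem gegenbauerZ_of_neg {k : ℤ} (hk : k < 0) (l z : ℝ) : gegenbauerZ k l z = 0 :=
  if_pos hk

theorem lap_eq_laplacian {N : ℕ} {f : EuclideanSpace ℝ (Fin N) → ℝ} {x : EuclideanSpace ℝ (Fin N)}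
    (hf : ContDiffAt ℝ 2 f x) : lap f x = Δ f x := by
  simp [lap, laplacian_eq_sum_fderiv_fderiv (EuclideanSpace.basisFun (Fin N) ℝ) hf]

theorem stmt15_general (N : ℕ) (l : ℝ) (hl : 0 < l) (k : ℕ)
    (y : EuclideanSpace ℝ (Fin N)) (hy : y ≠ 0)
    (f : EuclideanSpace ℝ (Fin N) → ℝ)
    (hf : ∀ x, f x = gegenbauerZ (k : ℤ) l (⟪x, y⟫ / (‖x‖ * ‖y‖)) * ‖x‖ ^ k)
    (x : EuclideanSpace ℝ (Fin N)) (hx : x ≠ 0) :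
    lap f x =
      2 * l * (2 * l + 2 - N) * gegenbauerZ ((k : ℤ) - 2) (l + 1) (⟪x, y⟫ / (‖x‖ * ‖y‖)) *
        ‖x‖ ^ ((k : ℤ) - 2) ∧
    (3 ≤ N → l = ((N : ℝ) - 2) / 2 → lap f x = 0) := by
  set u := (2 / ‖y‖) • y
  have hu : ‖u‖ = 2 := by
    rw [norm_smul, Real.norm_of_nonneg (by positivity), div_mul_cancel₀ _ (norm_ne_zero_iff.mpr hy)]
  have hfu : f =ᶠ[𝓝 x] gegenbauerHomog k l u := by
    filter_upwards [isOpen_compl_singleton.mem_nhds hx] with z hz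
    rw [hf, gegenbauerZ_natCast, gegenbauer_mul_norm_pow hz hy]
  have hlap : lap f x = Δ (gegenbauerHomog k l u) x := by
    rw [lap_eq_laplacian ((contDiff_gegenbauerHomog k l u).contDiffAt.congr_of_eventuallyEq hfu),
      (laplacian_congr_nhds hfu).eq_of_nhds]
  have hmain : lap f x = 2 * l * (2 * l + 2 - N) *
      gegenbauerZ ((k : ℤ) - 2) (l + 1) (⟪x, y⟫ / (‖x‖ * ‖y‖)) * ‖x‖ ^ ((k : ℤ) - 2) := by
    rw [hlap]
    rcases lt_or_ge k 2 with hk | hk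
    · rw [laplacian_gegenbauerHomog_of_lt_two hk, gegenbauerZ_of_neg (by omega)]
      ring
    · obtain ⟨k, rfl⟩ := Nat.exists_eq_add_of_le' hk
      rw [laplacian_gegenbauerHomog_add_two hl hu, finrank_euclideanSpace_fin,
        ← gegenbauer_mul_norm_pow hx hy]
      push_cast
      rw [add_sub_cancel_right, gegenbauerZ_natCast, zpow_natCast]
      ring
  exact ⟨hmain, fun _ hlN => by rw [hmain, hlN]; ring⟩

/-- `Δ_x [C^λ_k(w) ‖x‖^k] = 2λ(2λ+2-N) C^{λ+1}_{k-2}(w) ‖x‖^{k-2}`;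
in particular for `λ = (N-2)/2` the function is harmonic away from the origin. -/
theorem stmt15 (N : ℕ) (hN : 2 ≤ N) (l : ℝ) (hl : 0 < l) (k : ℕ)
    (y : EuclideanSpace ℝ (Fin N)) (hy : y ≠ 0)
    (f : EuclideanSpace ℝ (Fin N) → ℝ)
    (hf : ∀ x, f x = gegenbauerZ (k : ℤ) l (⟪x, y⟫ / (‖x‖ * ‖y‖)) * ‖x‖ ^ k)
    (x : EuclideanSpace ℝ (Fin N)) (hx : x ≠ 0) :
    lap f x =
      2 * l * (2 * l + 2 - N) * gegenbauerZ ((k : ℤ) - 2) (l + 1) (⟪x, y⟫ / (‖x‖ * ‖y‖)) *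
        ‖x‖ ^ ((k : ℤ) - 2) ∧
    (3 ≤ N → l = ((N : ℝ) - 2) / 2 → lap f x = 0) :=
  stmt15_general N l hl k y hy f hf x hx
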